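/- arXiv:2601.16855 — 9 statements merged into one kernel-verified Lean document; each statement's English description precedes it below -/
import Mathlib

section
/- Orbitopal fixing preserves equisatisfiability: let F be a CNF formula and M = (ℓ_{i,j}) an n × m matrix of pairwise distinct, pairwise non-complementary literals of F that exhibits row symmetry in F, such that each column C_j = {ℓ_{1,j}, …, ℓ_{n,j}} is a clause of F and is a unique literal clause of F. Let L be the set of unit clauses {ℓ_{n,1}} together with {¬ℓ_{i,j}} for every j ∈ {1, …, min(n,m)} and every i ≤ n − j. Then F is satisfiable if and only if F ∧ L is satisfiable. -/
variable {α : Type*} [DecidableEq α]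

/-- `neg` is a negation operation on literals: an involution with no fixed points. -/
def IsNegation (neg : α → α) : Prop :=
  (∀ ℓ, neg (neg ℓ) = ℓ) ∧ (∀ ℓ, neg ℓ ≠ ℓ)

/-- A truth assignment maps literals to Booleans, consistently with negation. -/
def IsAssignment (neg : α → α) (τ : α → Bool) : Prop :=
  ∀ ℓ, τ (neg ℓ) = !(τ ℓ)

/-- An assignment satisfies a clause if it sets some literal of the clause to true. -/
def SatClause (τ : α → Bool) (C : Finset α) : Prop :=
  ∃ ℓ ∈ C, τ ℓ = true

/-- An assignment satisfies a CNF formula if it satisfies every clause. -/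
def SatFormula (τ : α → Bool) (F : Finset (Finset α)) : Prop :=
  ∀ C ∈ F, SatClause τ C

/-- A syntactic symmetry of `F`: a permutation of the literals whose clause-wise
image maps `F` to itself and which commutes with negation. -/
def IsSymmetry (neg : α → α) (F : Finset (Finset α)) (σ : Equiv.Perm α) : Prop :=
  (F.image fun C => C.image fun ℓ => σ ℓ) = F ∧ ∀ ℓ, σ (neg ℓ) = neg (σ ℓ)

/-- `C` is a unique literal clause of `F`: no literal of `C` occurs in any clause
of `F \ {C}`. -/
def IsULC (F : Finset (Finset α)) (C : Finset α) : Prop :=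
  ∀ D ∈ F, D ≠ C → ∀ ℓ ∈ C, ℓ ∉ D

/-- An `n × m` matrix of literals exhibits row symmetry in `F`. -/
def HasRowSymmetry (neg : α → α) (F : Finset (Finset α)) {n m : ℕ}
    (M : Fin n → Fin m → α) : Prop :=
  ∀ i₁ i₂ : Fin n, ∃ σ : Equiv.Perm α, IsSymmetry neg F σ ∧
    (∀ j, σ (M i₁ j) = M i₂ j) ∧ (∀ j, σ (M i₂ j) = M i₁ j) ∧
    (∀ i j, i ≠ i₁ → i ≠ i₂ → σ (M i j) = M i j)

/-- Transporting a satisfying assignment along a syntactic symmetry. -/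
lemma sat_transport (neg : α → α) (F : Finset (Finset α)) (σ : Equiv.Perm α)
    (hσ : IsSymmetry neg F σ) (τ : α → Bool) (hτ : IsAssignment neg τ)
    (hs : SatFormula τ F) :
    IsAssignment neg (fun ℓ => τ (σ ℓ)) ∧ SatFormula (fun ℓ => τ (σ ℓ)) F := by
  constructor
  · intro ℓ
    simp only [hσ.2 ℓ, hτ (σ ℓ)]
  · intro C hC
    have himg : (C.image fun ℓ => σ ℓ) ∈ F := by
      rw [← hσ.1]
      exact Finset.mem_image_of_mem _ hC
    obtain ⟨ℓ', hℓ'C, hℓ'⟩ := hs _ himg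
    obtain ⟨ℓ, hℓC, rfl⟩ := Finset.mem_image.mp hℓ'C
    exact ⟨ℓ, hℓC, hℓ'⟩

/-- Orbitopal fixing preserves equisatisfiability. The matrix `M` has
`n+1` rows and `m+1` columns (1-based indices `i, j` of the paper correspond to
0-based indices `i-1, j-1`). The added unit clauses are `{ℓ_{n,1}}` together with
`{¬ℓ_{i,j}}` for `j ∈ [1, min(n,m)]` and `i ≤ n − j` (1-based). -/
theorem orbitopal_fixing_equisat (neg : α → α) (hneg : IsNegation neg)
    (F : Finset (Finset α)) {n m : ℕ} (M : Fin (n+1) → Fin (m+1) → α)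
    (hmem : ∀ i j, ∃ C ∈ F, M i j ∈ C)
    (hdist : ∀ i j i' j', M i j = M i' j' → i = i' ∧ j = j')
    (hcompl : ∀ i j i' j', M i j ≠ neg (M i' j'))
    (hrow : HasRowSymmetry neg F M)
    (hcolF : ∀ j, (Finset.univ.image fun i => M i j) ∈ F)
    (hulc : ∀ j, IsULC F (Finset.univ.image fun i => M i j)) :
    ((∃ τ, IsAssignment neg τ ∧ SatFormula τ F) ↔
      (∃ τ, IsAssignment neg τ ∧ SatFormula τ (F ∪
        insert ({M (Fin.last n) 0} : Finset α)
          ((Finset.univ.filter fun p : Fin (n+1) × Fin (m+1) =>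
              p.2.val + 1 ≤ min (n+1) (m+1) ∧ (p.1.val + 1) + (p.2.val + 1) ≤ n + 1).image
            fun p => ({neg (M p.1 p.2)} : Finset α))))) := by
  classical
  have hinv := hneg.1
  constructor
  · rintro ⟨τ₀, hτ₀, hs₀⟩
    -- Step 1: normalize so that every column j has a true literal at a row r with n ≤ r + j.
    have key : ∀ t : ℕ, t ≤ m + 1 → ∃ τ, IsAssignment neg τ ∧ SatFormula τ F ∧
        ∀ j : Fin (m+1), j.val < t →
          ∃ r : Fin (n+1), n ≤ r.val + j.val ∧ τ (M r j) = true := by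
      intro t
      induction t with
      | zero => exact fun _ => ⟨τ₀, hτ₀, hs₀, fun j hj => absurd hj (by omega)⟩
      | succ t ih =>
        intro ht
        obtain ⟨τ, hτ, hs, hcols⟩ := ih (by omega)
        have htm : t < m + 1 := by omega
        set j : Fin (m+1) := ⟨t, htm⟩ with hj
        have hjv : j.val = t := rfl
        obtain ⟨ℓ, hℓmem, hℓtrue⟩ := hs _ (hcolF j)
        obtain ⟨i, -, rfl⟩ := Finset.mem_image.mp hℓmem
        by_cases hcase : n ≤ i.val + t
        · refine ⟨τ, hτ, hs, fun j' hj' => ?_⟩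
          by_cases hlt : j'.val < t
          · exact hcols j' hlt
          · have : j' = j := Fin.ext (by omega)
            subst this
            exact ⟨i, by omega, hℓtrue⟩
        · push_neg at hcase
          have htn : t < n := by omega
          set r : Fin (n+1) := ⟨n - t, by omega⟩ with hr
          have hrv : r.val = n - t := rfl
          obtain ⟨σ, hσ, hσ1, hσ2, hσfix⟩ := hrow i r
          obtain ⟨hτ', hs'⟩ := sat_transport neg F σ hσ τ hτ hs
          refine ⟨fun ℓ => τ (σ ℓ), hτ', hs', fun j' hj' => ?_⟩
          by_cases hlt : j'.val < t
          · obtain ⟨r', hr'1, hr'2⟩ := hcols j' hlt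
            refine ⟨r', hr'1, ?_⟩
            have h1 : r' ≠ i := by
              intro h; apply absurd hr'1; rw [h]; omega
            have h2 : r' ≠ r := by
              intro h
              have : r'.val = n - t := by rw [h]
              omega
            simp only [hσfix r' j' h1 h2, hr'2]
          · have : j' = j := Fin.ext (by omega)
            subst this
            refine ⟨r, by omega, ?_⟩
            simp only [hσ2 j, hℓtrue]
    obtain ⟨τ, hτ, hs, hcols⟩ := key (m+1) le_rfl
    have hcols' : ∀ j : Fin (m+1), ∃ r : Fin (n+1), n ≤ r.val + j.val ∧ τ (M r j) = true :=
      fun j => hcols j j.isLt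
    -- Step 2: zero out the staircase region.
    set Pos : α → Prop := fun ℓ => ∃ p : Fin (n+1) × Fin (m+1),
      ℓ = M p.1 p.2 ∧ p.1.val + p.2.val < n with hPos
    set Neg : α → Prop := fun ℓ => ∃ p : Fin (n+1) × Fin (m+1),
      ℓ = neg (M p.1 p.2) ∧ p.1.val + p.2.val < n with hNeg
    set τ₂ : α → Bool := fun ℓ => if Pos ℓ then false else if Neg ℓ then true else τ ℓ
      with hτ₂
    -- basic computation lemmas
    have hA : ∀ p : Fin (n+1) × Fin (m+1), p.1.val + p.2.val < n →
        τ₂ (M p.1 p.2) = false := by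
      intro p hp
      simp only [hτ₂]
      rw [if_pos ⟨p, rfl, hp⟩]
    have hB : ∀ p : Fin (n+1) × Fin (m+1), ¬(p.1.val + p.2.val < n) →
        τ₂ (M p.1 p.2) = τ (M p.1 p.2) := by
      intro p hp
      simp only [hτ₂]
      rw [if_neg, if_neg]
      · rintro ⟨q, hq, -⟩
        exact hcompl p.1 p.2 q.1 q.2 hq
      · rintro ⟨q, hq, hqs⟩
        obtain ⟨h1, h2⟩ := hdist p.1 p.2 q.1 q.2 hq
        exact hp (by rw [h1, h2]; exact hqs)
    have hC : ∀ p : Fin (n+1) × Fin (m+1), p.1.val + p.2.val < n →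
        τ₂ (neg (M p.1 p.2)) = true := by
      intro p hp
      simp only [hτ₂]
      rw [if_neg, if_pos ⟨p, rfl, hp⟩]
      rintro ⟨q, hq, -⟩
      exact hcompl q.1 q.2 p.1 p.2 hq.symm
    have hnegint : Function.Injective neg := by
      intro a b h
      have := congrArg neg h
      rwa [hinv, hinv] at this
    have hD : ∀ p : Fin (n+1) × Fin (m+1), ¬(p.1.val + p.2.val < n) →
        τ₂ (neg (M p.1 p.2)) = τ (neg (M p.1 p.2)) := by
      intro p hp
      simp only [hτ₂]
      rw [if_neg, if_neg]
      · rintro ⟨q, hq, hqs⟩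
        obtain ⟨h1, h2⟩ := hdist p.1 p.2 q.1 q.2 (hnegint hq)
        exact hp (by rw [h1, h2]; exact hqs)
      · rintro ⟨q, hq, -⟩
        exact hcompl q.1 q.2 p.1 p.2 hq.symm
    have hE : ∀ ℓ, ¬ Pos ℓ → ¬ Neg ℓ → τ₂ ℓ = τ ℓ := by
      intro ℓ h1 h2
      simp only [hτ₂]
      rw [if_neg h1, if_neg h2]
    -- τ₂ is an assignment
    have hτ₂asg : IsAssignment neg τ₂ := by
      intro ℓ
      by_cases h1 : ∃ p : Fin (n+1) × Fin (m+1), ℓ = M p.1 p.2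
      · obtain ⟨p, rfl⟩ := h1
        by_cases hp : p.1.val + p.2.val < n
        · rw [hA p hp, hC p hp]; rfl
        · rw [hB p hp, hD p hp, hτ]
      · by_cases h2 : ∃ p : Fin (n+1) × Fin (m+1), ℓ = neg (M p.1 p.2)
        · obtain ⟨p, rfl⟩ := h2
          rw [hinv]
          by_cases hp : p.1.val + p.2.val < n
          · rw [hA p hp, hC p hp]; rfl
          · rw [hB p hp, hD p hp]
            have := hτ (neg (M p.1 p.2))
            rw [hinv] at this
            rw [this]
        · have hPosℓ : ¬ Pos ℓ := by
            rintro ⟨p, hq, -⟩; exact h1 ⟨p, hq⟩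
          have hNegℓ : ¬ Neg ℓ := by
            rintro ⟨p, hq, -⟩; exact h2 ⟨p, hq⟩
          have hPosn : ¬ Pos (neg ℓ) := by
            rintro ⟨p, hq, -⟩
            apply h2
            exact ⟨p, by rw [← hq, hinv]⟩
          have hNegn : ¬ Neg (neg ℓ) := by
            rintro ⟨p, hq, -⟩
            apply h1
            exact ⟨p, hnegint hq⟩
          rw [hE _ hPosn hNegn, hE _ hPosℓ hNegℓ, hτ]
    refine ⟨τ₂, hτ₂asg, ?_⟩
    intro C hC
    rw [Finset.mem_union] at hC
    rcases hC with hCF | hCL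
    · -- clause of F
      obtain ⟨ℓ, hℓC, hℓtrue⟩ := hs _ hCF
      by_cases h1 : ∃ p : Fin (n+1) × Fin (m+1), ℓ = M p.1 p.2 ∧ p.1.val + p.2.val < n
      · -- ℓ is a zeroed matrix literal; C must be the column clause, use the guaranteed row
        obtain ⟨p, rfl, hp⟩ := h1
        have hCcol : C = Finset.univ.image fun i => M i p.2 := by
          by_contra hne
          exact hulc p.2 C hCF hne (M p.1 p.2)
            (Finset.mem_image_of_mem _ (Finset.mem_univ p.1)) hℓC
        obtain ⟨r, hrge, hrtrue⟩ := hcols' p.2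
        refine ⟨M r p.2, ?_, ?_⟩
        · rw [hCcol]; exact Finset.mem_image_of_mem _ (Finset.mem_univ r)
        · rw [hB (r, p.2) (by simp; omega), hrtrue]
      · -- otherwise τ₂ ℓ = true still
        by_cases h2 : ∃ p : Fin (n+1) × Fin (m+1), ℓ = M p.1 p.2
        · obtain ⟨p, rfl⟩ := h2
          have hp : ¬(p.1.val + p.2.val < n) := fun h => h1 ⟨p, rfl, h⟩
          exact ⟨M p.1 p.2, hℓC, by rw [hB p hp, hℓtrue]⟩
        · by_cases h3 : ∃ p : Fin (n+1) × Fin (m+1), ℓ = neg (M p.1 p.2)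
          · obtain ⟨p, rfl⟩ := h3
            by_cases hp : p.1.val + p.2.val < n
            · exact ⟨_, hℓC, hC p hp⟩
            · exact ⟨_, hℓC, by rw [hD p hp, hℓtrue]⟩
          · have hPosℓ : ¬ Pos ℓ := by rintro ⟨p, hq, -⟩; exact h2 ⟨p, hq⟩
            have hNegℓ : ¬ Neg ℓ := by rintro ⟨p, hq, -⟩; exact h3 ⟨p, hq⟩
            exact ⟨ℓ, hℓC, by rw [hE ℓ hPosℓ hNegℓ, hℓtrue]⟩
    · rw [Finset.mem_insert] at hCL
      rcases hCL with rfl | hCL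
      · -- unit clause {M (last n) 0}
        refine ⟨M (Fin.last n) 0, Finset.mem_singleton_self _, ?_⟩
        obtain ⟨r, hrge, hrtrue⟩ := hcols' 0
        have h0 : ((0 : Fin (m+1))).val = 0 := rfl
        have hrn : r = Fin.last n := Fin.ext (by
          simp only [Fin.val_last]
          have := r.isLt
          omega)
        subst hrn
        have hnot : ¬((Fin.last n, (0 : Fin (m+1))).1.val + (Fin.last n, (0 : Fin (m+1))).2.val < n) := by
          simp only [Fin.val_last]
          omega
        rw [hB (Fin.last n, 0) hnot, hrtrue]
      · obtain ⟨p, hpfil, rfl⟩ := Finset.mem_image.mp hCL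
        rw [Finset.mem_filter] at hpfil
        obtain ⟨-, -, hple⟩ := hpfil
        have hp : p.1.val + p.2.val < n := by omega
        exact ⟨neg (M p.1 p.2), Finset.mem_singleton_self _, hC p hp⟩
  · rintro ⟨τ, hτ, hs⟩
    exact ⟨τ, hτ, fun C hC => hs C (Finset.mem_union_left _ hC)⟩
end

section
/- First-column fixing: let F be a satisfiable CNF formula and M = (ℓ_{i,j}) an n × m matrix of pairwise distinct, pairwise non-complementary literals of F that exhibits row symmetry in F, such that the first column C₁ = {ℓ_{1,1}, …, ℓ_{n,1}} is a clause of F and is a unique literal clause of F. Then F is satisfied by a truth assignment that sets ℓ_{n,1} to true and sets ℓ_{i,1} to false for every i < n. -/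
variable {α : Type*} [DecidableEq α]

/-- First-column fixing. The matrix `M` has `n+1` rows and `m+1`
columns; the bottom row of the paper (1-based row `n`) is `Fin.last n`. -/
theorem first_column_fixing (neg : α → α) (hneg : IsNegation neg)
    (F : Finset (Finset α)) {n m : ℕ} (M : Fin (n+1) → Fin (m+1) → α)
    (hmem : ∀ i j, ∃ C ∈ F, M i j ∈ C)
    (hdist : ∀ i j i' j', M i j = M i' j' → i = i' ∧ j = j')
    (hcompl : ∀ i j i' j', M i j ≠ neg (M i' j'))
    (hrow : HasRowSymmetry neg F M)
    (hcolF : (Finset.univ.image fun i => M i 0) ∈ F)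
    (hulc : IsULC F (Finset.univ.image fun i => M i 0))
    (hsat : ∃ τ, IsAssignment neg τ ∧ SatFormula τ F) :
    ∃ τ, IsAssignment neg τ ∧ SatFormula τ F ∧
      τ (M (Fin.last n) 0) = true ∧
      ∀ i : Fin (n+1), i < Fin.last n → τ (M i 0) = false := by

  obtain ⟨τ, hτa, hτF⟩ := hsat
  obtain ⟨ℓ₀, hℓ₀mem, hℓ₀true⟩ := hτF _ hcolF
  rw [Finset.mem_image] at hℓ₀mem
  obtain ⟨k, -, rfl⟩ := hℓ₀mem
  obtain ⟨σ, ⟨hσF, hσneg⟩, hsw1, hsw2, hfix⟩ := hrow k (Fin.last n)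
  set τ' : α → Bool := fun ℓ => τ (σ ℓ) with hτ'def
  have hτ'a : IsAssignment neg τ' := fun ℓ => by
    simp only [hτ'def, hσneg, hτa (σ ℓ)]
  have hτ'F : SatFormula τ' F := by
    intro C hC
    have hCimg : (C.image fun ℓ => σ ℓ) ∈ F := by
      rw [← hσF]; exact Finset.mem_image_of_mem _ hC
    obtain ⟨ℓ', hℓ', ht⟩ := hτF _ hCimg
    rw [Finset.mem_image] at hℓ'
    obtain ⟨ℓ, hℓ, rfl⟩ := hℓ'
    exact ⟨ℓ, hℓ, ht⟩
  have hτ'last : τ' (M (Fin.last n) 0) = true := by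
    simp only [hτ'def, hsw2 0, hℓ₀true]
  set S : Finset α :=
    (Finset.univ.filter (fun i : Fin (n+1) => i ≠ Fin.last n)).image (fun i => M i 0) with hS
  have hSmem : ∀ ℓ, ℓ ∈ S ↔ ∃ i : Fin (n+1), i ≠ Fin.last n ∧ M i 0 = ℓ := by
    intro ℓ; simp [hS]
  have hnegS : ∀ ℓ ∈ S, neg ℓ ∉ S := by
    intro ℓ hℓ hnℓ
    rw [hSmem] at hℓ hnℓ
    obtain ⟨i, -, rfl⟩ := hℓ
    obtain ⟨i', -, h⟩ := hnℓ
    exact hcompl i' 0 i 0 h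
  have hlastS : M (Fin.last n) 0 ∉ S := by
    rw [hSmem]
    rintro ⟨i, hi, h⟩
    exact hi (hdist i 0 (Fin.last n) 0 h).1
  have hnlastS : neg (M (Fin.last n) 0) ∉ S := by
    rw [hSmem]
    rintro ⟨i, hi, h⟩
    exact hcompl i 0 (Fin.last n) 0 h
  refine ⟨fun ℓ => if ℓ ∈ S then false else if neg ℓ ∈ S then true else τ' ℓ, ?_, ?_, ?_, ?_⟩
  · intro ℓ
    by_cases h1 : ℓ ∈ S
    · have h2 : neg ℓ ∉ S := hnegS ℓ h1
      have h3 : neg (neg ℓ) ∈ S := by rw [hneg.1]; exact h1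
      simp [h1, h2, h3]
    · by_cases h2 : neg ℓ ∈ S
      · simp [h1, h2]
      · have h3 : neg (neg ℓ) ∉ S := by rw [hneg.1]; exact h1
        simp [h1, h2, h3, hτ'a ℓ]
  · intro C hC
    by_cases hC1 : C = Finset.univ.image (fun i => M i 0)
    · subst hC1
      refine ⟨M (Fin.last n) 0, Finset.mem_image_of_mem _ (Finset.mem_univ _), ?_⟩
      simp [hlastS, hnlastS, hτ'last]
    · obtain ⟨ℓ, hℓ, ht⟩ := hτ'F C hC
      refine ⟨ℓ, hℓ, ?_⟩
      have h1 : ℓ ∉ S := by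
        rw [hSmem]
        rintro ⟨i, hi, rfl⟩
        exact hulc C hC hC1 _ (Finset.mem_image_of_mem _ (Finset.mem_univ i)) hℓ
      by_cases h2 : neg ℓ ∈ S
      · simp [h1, h2]
      · simp [h1, h2, ht]
  · simp [hlastS, hnlastS, hτ'last]
  · intro i hi
    have h1 : M i 0 ∈ S := by
      rw [hSmem]; exact ⟨i, Fin.ne_of_lt hi, rfl⟩
    simp [h1]
end

section
/- Clausal fixing preserves equisatisfiability: let F be a CNF formula containing a clause C = {ℓ₁, …, ℓ_k} such that for every i ∈ {1, …, k} there is a syntactic symmetry σ of F with σ(ℓ₁) = ℓ_i (all literals of C lie in the orbit of ℓ₁ under Aut(F)). Then F is satisfiable if and only if F ∧ {ℓ₁} is satisfiable. -/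
variable {α : Type*} [DecidableEq α]

/-- Clausal fixing preserves equisatisfiability: if every literal of a
clause C ∈ F lies in the orbit of ℓ₁ under Aut(F), then F and F ∧ {ℓ₁} are
equisatisfiable. -/
theorem clausal_fixing_equisat (neg : α → α) (hneg : IsNegation neg)
    (F : Finset (Finset α)) (C : Finset α) (hCF : C ∈ F)
    (ℓ₁ : α) (h₁ : ℓ₁ ∈ C)
    (horb : ∀ ℓ ∈ C, ∃ σ : Equiv.Perm α, IsSymmetry neg F σ ∧ σ ℓ₁ = ℓ) :
    (∃ τ, IsAssignment neg τ ∧ SatFormula τ F) ↔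
    (∃ τ, IsAssignment neg τ ∧ SatFormula τ (insert ({ℓ₁} : Finset α) F)) := by
  constructor
  · rintro ⟨τ, hτ, hsat⟩
    obtain ⟨ℓ, hℓC, hℓt⟩ := hsat C hCF
    obtain ⟨σ, ⟨hσF, hσneg⟩, hσℓ⟩ := horb ℓ hℓC
    refine ⟨τ ∘ σ, ?_, ?_⟩
    · intro x
      simp only [Function.comp, hσneg x, hτ (σ x)]
    · intro D hD
      rcases Finset.mem_insert.mp hD with h | h
      · exact ⟨ℓ₁, by simp [h], by simpa [Function.comp, hσℓ] using hℓt⟩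
      · have : D.image (fun x => σ x) ∈ F := by
          rw [← hσF]; exact Finset.mem_image_of_mem _ h
        obtain ⟨y, hy, hyt⟩ := hsat _ this
        obtain ⟨x, hx, rfl⟩ := Finset.mem_image.mp hy
        exact ⟨x, hx, hyt⟩
  · rintro ⟨τ, hτ, hsat⟩
    exact ⟨τ, hτ, fun D hD => hsat D (Finset.mem_insert_of_mem hD)⟩
end

section
/- Negation fixing preserves equisatisfiability: let F be a CNF formula, ℓ a literal of F, and σ a syntactic symmetry of F with σ(ℓ) = ¬ℓ. Then F is satisfiable if and only if F ∧ {ℓ} is satisfiable. -/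
variable {α : Type*} [DecidableEq α]

/-- Negation fixing preserves equisatisfiability: if some syntactic
symmetry of F maps the literal ℓ of F to its negation, then F and F ∧ {ℓ} are
equisatisfiable. -/
theorem negation_fixing_equisat (neg : α → α) (hneg : IsNegation neg)
    (F : Finset (Finset α)) (ℓ : α) (hℓ : ∃ C ∈ F, ℓ ∈ C)
    (σ : Equiv.Perm α) (hσ : IsSymmetry neg F σ) (hσℓ : σ ℓ = neg ℓ) :
    (∃ τ, IsAssignment neg τ ∧ SatFormula τ F) ↔
    (∃ τ, IsAssignment neg τ ∧ SatFormula τ (insert ({ℓ} : Finset α) F)) := by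
  obtain ⟨hinv, hne⟩ := hneg
  constructor
  · rintro ⟨τ, hτ, hF⟩
    by_cases h : τ ℓ = true
    · refine ⟨τ, hτ, ?_⟩
      intro C hC
      rcases Finset.mem_insert.mp hC with rfl | hC
      · exact ⟨ℓ, Finset.mem_singleton_self ℓ, h⟩
      · exact hF C hC
    · refine ⟨fun x => τ (σ x), ?_, ?_⟩
      · intro x
        simp only [hσ.2 x, hτ (σ x)]
      · intro C hC
        rcases Finset.mem_insert.mp hC with rfl | hC
        · refine ⟨ℓ, Finset.mem_singleton_self ℓ, ?_⟩
          show τ (σ ℓ) = true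
          rw [hσℓ, hτ ℓ]
          simpa using h
        · have hσC : (C.image fun x => σ x) ∈ F := by
            rw [← hσ.1]; exact Finset.mem_image_of_mem _ hC
          obtain ⟨y, hy, hyt⟩ := hF _ hσC
          obtain ⟨x, hx, rfl⟩ := Finset.mem_image.mp hy
          exact ⟨x, hx, hyt⟩
  · rintro ⟨τ, hτ, hF⟩
    exact ⟨τ, hτ, fun C hC => hF C (Finset.mem_insert_of_mem hC)⟩
end

section
/- Semantic soundness of substitution redundancy: let F be a CNF formula, C a clause, and ω a substitution such that every truth assignment τ satisfying F and falsifying every literal of C yields a composed assignment τ∘ω satisfying (F ∧ C)_{|ω} — equivalently, such that F ∧ ¬C semantically entails (F ∧ C)_{|ω}. Then F is satisfiable if and only if F ∧ C is satisfiable. -/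
variable {α : Type*} [DecidableEq α]

/-- A substitution maps each literal to a literal (`Sum.inl`) or to a fixed truth
value (`Sum.inr`), consistently with negation. -/
def SubstRespectsNeg (neg : α → α) (ω : α → α ⊕ Bool) : Prop :=
  ∀ ℓ, ω (neg ℓ) = Sum.map neg (fun b => !b) (ω ℓ)

/-- The composed assignment τ∘ω: assigns the fixed truth value if ω fixes one, and
τ(ω(ℓ)) otherwise. -/
def compAssign (τ : α → Bool) (ω : α → α ⊕ Bool) : α → Bool := fun ℓ =>
  match ω ℓ with
  | Sum.inl ℓ' => τ ℓ'
  | Sum.inr b => b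

/-- Semantic soundness of substitution redundancy: if every assignment
τ satisfying F and falsifying every literal of C yields a composed assignment τ∘ω
satisfying F ∧ C (i.e. F ∧ ¬C ⊨ (F ∧ C)_{|ω}), then F and F ∧ C are
equisatisfiable. -/
theorem substitution_redundancy_sound (neg : α → α) (hneg : IsNegation neg)
    (F : Finset (Finset α)) (C : Finset α)
    (ω : α → α ⊕ Bool) (hω : SubstRespectsNeg neg ω)
    (h : ∀ τ : α → Bool, IsAssignment neg τ → SatFormula τ F →
      (∀ ℓ ∈ C, τ ℓ = false) → SatFormula (compAssign τ ω) (insert C F)) :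
    (∃ τ, IsAssignment neg τ ∧ SatFormula τ F) ↔
    (∃ τ, IsAssignment neg τ ∧ SatFormula τ (insert C F)) := by
  constructor
  · rintro ⟨τ, hτ, hF⟩
    by_cases hC : SatClause τ C
    · exact ⟨τ, hτ, fun D hD => by
        rcases Finset.mem_insert.mp hD with rfl | hD
        · exact hC
        · exact hF D hD⟩
    · have hfalse : ∀ ℓ ∈ C, τ ℓ = false := by
        intro ℓ hℓ
        by_contra hne
        exact hC ⟨ℓ, hℓ, by simpa using hne⟩
      refine ⟨compAssign τ ω, ?_, h τ hτ hF hfalse⟩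
      intro ℓ
      unfold compAssign
      rw [hω ℓ]
      cases hω' : ω ℓ with
      | inl ℓ' => simp [hτ ℓ']
      | inr b => simp
  · rintro ⟨τ, hτ, hF⟩
    exact ⟨τ, hτ, fun D hD => hF D (Finset.mem_insert_of_mem hD)⟩
end

section
/- Clausal fixing binary-clause witness: let F be a CNF formula, C = {ℓ₁, …, ℓ_k} ∈ F a clause, ω a syntactic symmetry of F with ω(ℓ₁) = ℓ_i for some i ∈ {2, …, k}, and L' a set of clauses each containing ℓ₁. Then F ∧ L' ∧ {¬ℓ₁} ∧ {ℓ_i} semantically entails (F ∧ L' ∧ {ℓ₁, ¬ℓ_i})_{|ω}, where the substitution treats ω as mapping each literal to its image. -/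
variable {α : Type*} [DecidableEq α]

/-- Clausal fixing binary-clause witness: with C ∈ F, ℓ₁, ℓᵢ ∈ C,
ω a syntactic symmetry of F with ω(ℓ₁) = ℓᵢ, and L' a set of clauses each
containing ℓ₁, we have F ∧ L' ∧ {¬ℓ₁} ∧ {ℓᵢ} ⊨ (F ∧ L' ∧ {ℓ₁, ¬ℓᵢ})_{|ω}. -/
theorem clausal_fixing_witness (neg : α → α) (hneg : IsNegation neg)
    (F : Finset (Finset α)) (C : Finset α) (hCF : C ∈ F)
    (ℓ₁ ℓi : α) (h₁ : ℓ₁ ∈ C) (hi : ℓi ∈ C) (hne : ℓi ≠ ℓ₁)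
    (ω : Equiv.Perm α) (hω : IsSymmetry neg F ω) (hω₁ : ω ℓ₁ = ℓi)
    (L' : Finset (Finset α)) (hL' : ∀ D ∈ L', ℓ₁ ∈ D)
    (τ : α → Bool) (hτ : IsAssignment neg τ)
    (hF : SatFormula τ F) (hsatL' : SatFormula τ L')
    (h1 : τ ℓ₁ = false) (h2 : τ ℓi = true) :
    SatFormula τ
      ((F ∪ L' ∪ {({ℓ₁, neg ℓi} : Finset α)}).image fun D => D.image fun ℓ => ω ℓ) := by
  intro E hE
  simp only [Finset.mem_image, Finset.mem_union, Finset.mem_singleton] at hE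
  obtain ⟨D, hD, rfl⟩ := hE
  rcases hD with (hD | hD) | hD
  · -- D ∈ F: its image is in F since ω(F) = F
    apply hF
    rw [← hω.1]
    exact Finset.mem_image_of_mem _ hD
  · -- D ∈ L': image contains ω ℓ₁ = ℓi
    exact ⟨ℓi, by rw [← hω₁]; exact Finset.mem_image_of_mem _ (hL' D hD), h2⟩
  · subst hD
    exact ⟨ℓi, by rw [← hω₁]; exact Finset.mem_image_of_mem _ (by simp), h2⟩
end

section
/- Clausal fixing repair: let F be a CNF formula containing a clause C = {ℓ₁, …, ℓ_k} such that for every i there is a syntactic symmetry σ_i of F with σ_i(ℓ₁) = ℓ_i. If τ is a truth assignment satisfying F, then there is a truth assignment τ' satisfying F with τ'(ℓ₁) = true, obtained as τ' = τ∘σ_i for a suitable i. -/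
variable {α : Type*} [DecidableEq α]

/-- Clausal fixing repair: if every literal of a clause C ∈ F lies in
the orbit of ℓ₁ under Aut(F) and τ satisfies F, then for a suitable symmetry σ
(with σ(ℓ₁) ∈ C) the assignment τ∘σ satisfies F and sets ℓ₁ to true. -/
theorem clausal_fixing_repair (neg : α → α) (hneg : IsNegation neg)
    (F : Finset (Finset α)) (C : Finset α) (hCF : C ∈ F)
    (ℓ₁ : α) (h₁ : ℓ₁ ∈ C)
    (horb : ∀ ℓ ∈ C, ∃ σ : Equiv.Perm α, IsSymmetry neg F σ ∧ σ ℓ₁ = ℓ)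
    (τ : α → Bool) (hτ : IsAssignment neg τ) (hF : SatFormula τ F) :
    ∃ σ : Equiv.Perm α, IsSymmetry neg F σ ∧ σ ℓ₁ ∈ C ∧
      SatFormula (fun ℓ => τ (σ ℓ)) F ∧ τ (σ ℓ₁) = true := by
  obtain ⟨ℓ, hℓC, hℓt⟩ := hF C hCF
  obtain ⟨σ, hσ, hσℓ⟩ := horb ℓ hℓC
  refine ⟨σ, hσ, hσℓ ▸ hℓC, ?_, hσℓ ▸ hℓt⟩
  intro D hD
  have hDin : (D.image fun x => σ x) ∈ F := by
    rw [← hσ.1]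
    exact Finset.mem_image_of_mem _ hD
  obtain ⟨ℓ', hℓ'D, hℓ't⟩ := hF _ hDin
  obtain ⟨x, hxD, rfl⟩ := Finset.mem_image.mp hℓ'D
  exact ⟨x, hxD, hℓ't⟩
end

section
/- Orbitopal row-swap repair step: let F be a CNF formula and M = (ℓ_{i,j}) an n × m matrix of pairwise distinct, pairwise non-complementary literals exhibiting row symmetry in F, with each column C_j a unique literal clause of F. Suppose τ satisfies F, sets exactly one literal of each column to true, and for each column j' < j its true literal lies strictly below row n − j' . If the true literal of column j lies in row i ≤ n − j, then the assignment τ∘σ_{i, n−j+1} (composing τ with the row symmetry swapping rows i and n−j+1) satisfies F, still sets exactly one literal of each column to true, sets every literal ℓ_{i',j} with i' ≤ n − j to false, and leaves the true literals of columns j' < j strictly below row n − j'. -/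
variable {α : Type*} [DecidableEq α]

/-- Orbitopal row-swap repair step. Indices are 0-based, so the
1-based conditions of the paper translate as: the true literal of column j' < j
lies strictly below row n − j' iff its 0-based row r satisfies n ≤ r + j' + 1;
the true literal of column j lies in row i ≤ n − j iff i + j + 2 ≤ n (0-based);
and the swap partner row n − j + 1 is the 0-based row k with k + j + 1 = n. -/
theorem orbitopal_row_swap_repair (neg : α → α) (hneg : IsNegation neg)
    (F : Finset (Finset α)) {n m : ℕ} (M : Fin n → Fin m → α)
    (hdist : ∀ i j i' j', M i j = M i' j' → i = i' ∧ j = j')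
    (hcompl : ∀ i j i' j', M i j ≠ neg (M i' j'))
    (hrow : HasRowSymmetry neg F M)
    (hcolF : ∀ j, (Finset.univ.image fun i => M i j) ∈ F)
    (hulc : ∀ j, IsULC F (Finset.univ.image fun i => M i j))
    (τ : α → Bool) (hτ : IsAssignment neg τ) (hsat : SatFormula τ F)
    (hone : ∀ j : Fin m, ∃! i : Fin n, τ (M i j) = true)
    (j : Fin m)
    (hbelow : ∀ j' : Fin m, j' < j → ∀ i : Fin n,
      τ (M i j') = true → n ≤ i.val + j'.val + 1)
    (i : Fin n) (hi : τ (M i j) = true) (hij : i.val + j.val + 2 ≤ n)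
    (k : Fin n) (hk : k.val + j.val + 1 = n)
    (σ : Equiv.Perm α) (hσ : IsSymmetry neg F σ)
    (hswapik : ∀ j' : Fin m, σ (M i j') = M k j')
    (hswapki : ∀ j' : Fin m, σ (M k j') = M i j')
    (hfix : ∀ (i' : Fin n) (j' : Fin m), i' ≠ i → i' ≠ k → σ (M i' j') = M i' j') :
    SatFormula (fun ℓ => τ (σ ℓ)) F ∧
    (∀ j' : Fin m, ∃! i' : Fin n, τ (σ (M i' j')) = true) ∧
    (∀ i' : Fin n, i'.val + j.val + 2 ≤ n → τ (σ (M i' j)) = false) ∧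
    (∀ j' : Fin m, j' < j → ∀ i' : Fin n,
      τ (σ (M i' j')) = true → n ≤ i'.val + j'.val + 1) := by
  obtain ⟨hσF, hσneg⟩ := hσ
  have hik : i ≠ k := by
    intro h
    have : i.val + j.val + 1 = n := h ▸ hk
    omega
  set s : Fin n → Fin n := fun i' => if i' = i then k else if i' = k then i else i' with hs
  have hσM : ∀ (i' : Fin n) (j' : Fin m), σ (M i' j') = M (s i') j' := by
    intro i' j'
    by_cases h1 : i' = i
    · subst h1; simp [hs, hswapik]
    · by_cases h2 : i' = k
      · subst h2; simp [hs, Ne.symm hik, hswapki]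
      · simp [hs, h1, h2, hfix i' j' h1 h2]
  have hss : ∀ i', s (s i') = i' := by
    intro i'
    by_cases h1 : i' = i
    · subst h1; simp [hs, Ne.symm hik]
    · by_cases h2 : i' = k
      · subst h2; simp [hs, hik]
      · simp [hs, h1, h2]
  have hsat' : SatFormula (fun ℓ => τ (σ ℓ)) F := by
    intro C hC
    have hC' : C.image (fun ℓ => σ ℓ) ∈ F := by
      rw [← hσF]; exact Finset.mem_image_of_mem _ hC
    obtain ⟨ℓ', hℓ'C, hℓ'⟩ := hsat _ hC'
    obtain ⟨ℓ, hℓC, rfl⟩ := Finset.mem_image.mp hℓ'C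
    exact ⟨ℓ, hℓC, hℓ'⟩
  refine ⟨hsat', ?_, ?_, ?_⟩
  · intro j'
    obtain ⟨i₀, hi₀, huniq⟩ := hone j'
    refine ⟨s i₀, ?_, ?_⟩
    · show τ (σ (M (s i₀) j')) = true
      rw [hσM, hss]; exact hi₀
    · intro i' h
      rw [hσM] at h
      have h2 := huniq _ h
      rw [← h2, hss]
  · intro i' hi'
    rw [hσM]
    obtain ⟨i₀, _, hu⟩ := hone j
    have hiu : ∀ i'' : Fin n, τ (M i'' j) = true → i'' = i := fun i'' h =>
      (hu i'' h).trans (hu i hi).symm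
    rcases Bool.eq_false_or_eq_true (τ (M (s i') j)) with h | h
    case inr => exact h
    exfalso
    have hsi : s i' = i := hiu _ h
    by_cases h1 : i' = i
    · subst h1
      have : s i' = k := by simp [hs]
      rw [this] at hsi
      exact hik hsi.symm
    · by_cases h2 : i' = k
      · subst h2; omega
      · have : s i' = i' := by simp [hs, h1, h2]
        rw [this] at hsi
        exact h1 hsi
  · intro j' hj' i' ht
    rw [hσM] at ht
    have hb := hbelow j' hj' _ ht
    have hjj : j'.val < j.val := hj'
    by_cases h1 : i' = i
    · subst h1
      have hsk : s i' = k := by simp [hs]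
      rw [hsk] at hb
      omega
    · by_cases h2 : i' = k
      · subst h2
        have hsk : s i' = i := by simp [hs, Ne.symm hik]
        rw [hsk] at hb
        omega
      · have hsk : s i' = i' := by simp [hs, h1, h2]
        rw [hsk] at hb
        exact hb
end

section
/- Orbitopal fixing produces a satisfying assignment respecting all fixed units: let F be a satisfiable CNF formula and M = (ℓ_{i,j}) an n × m matrix of pairwise distinct, pairwise non-complementary literals exhibiting row symmetry in F, with each column C_j = {ℓ_{1,j}, …, ℓ_{n,j}} a clause of F that is a unique literal clause of F. Then there is a truth assignment satisfying F that sets ℓ_{n,1} to true and sets ℓ_{i,j} to false for every j ∈ {1, …, min(n,m)} and every i ≤ n − j. -/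
variable {α : Type*} [DecidableEq α]

theorem symm_transport' (neg : α → α) (F : Finset (Finset α)) (σ : Equiv.Perm α)
    (hσ : IsSymmetry neg F σ) (τ : α → Bool) (ha : IsAssignment neg τ)
    (hs : SatFormula τ F) :
    IsAssignment neg (fun ℓ => τ (σ.symm ℓ)) ∧ SatFormula (fun ℓ => τ (σ.symm ℓ)) F := by
  have hcomm : ∀ ℓ, σ.symm (neg ℓ) = neg (σ.symm ℓ) := by
    intro ℓ
    have := hσ.2 (σ.symm ℓ)
    rw [Equiv.apply_symm_apply] at this
    exact Equiv.symm_apply_eq σ |>.mpr this.symm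
  constructor
  · intro ℓ
    simp only [hcomm ℓ, ha (σ.symm ℓ)]
  · intro D hD
    rw [← hσ.1] at hD
    obtain ⟨C, hC, rfl⟩ := Finset.mem_image.mp hD
    obtain ⟨ℓ, hℓC, hτℓ⟩ := hs C hC
    exact ⟨σ ℓ, Finset.mem_image_of_mem _ hℓC, by simpa using hτℓ⟩

/-- Orbitopal fixing produces a satisfying assignment respecting all
fixed units. The matrix has `n+1` rows and `m+1` columns (0-based indices); the
fixed-false positions are those with 1-based `j ∈ [1, min(n,m)]` and `i ≤ n − j`,
i.e. 0-based `j+1 ≤ min (n+1) (m+1)` and `(i+1) + (j+1) ≤ n+1` (for the paper's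
matrix dimensions `n+1` rows and `m+1` columns). -/
theorem orbitopal_fixing_assignment (neg : α → α) (hneg : IsNegation neg)
    (F : Finset (Finset α)) {n m : ℕ} (M : Fin (n+1) → Fin (m+1) → α)
    (hdist : ∀ i j i' j', M i j = M i' j' → i = i' ∧ j = j')
    (hcompl : ∀ i j i' j', M i j ≠ neg (M i' j'))
    (hrow : HasRowSymmetry neg F M)
    (hcolF : ∀ j, (Finset.univ.image fun i => M i j) ∈ F)
    (hulc : ∀ j, IsULC F (Finset.univ.image fun i => M i j))
    (hsat : ∃ τ, IsAssignment neg τ ∧ SatFormula τ F) :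
    ∃ τ, IsAssignment neg τ ∧ SatFormula τ F ∧
      τ (M (Fin.last n) 0) = true ∧
      ∀ (i : Fin (n+1)) (j : Fin (m+1)),
        j.val + 1 ≤ min (n+1) (m+1) → (i.val + 1) + (j.val + 1) ≤ n + 1 →
          τ (M i j) = false := by
  classical
  -- Step 1: by induction on k, rearrange rows so every column j < k has a true
  -- literal in some row i with n - j ≤ i.
  have key : ∀ k : ℕ, k ≤ m + 1 → ∃ τ, IsAssignment neg τ ∧ SatFormula τ F ∧
      ∀ j : Fin (m+1), j.val < k → ∃ i : Fin (n+1), n - j.val ≤ i.val ∧ τ (M i j) = true := by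
    intro k
    induction k with
    | zero =>
      intro _
      obtain ⟨τ, h1, h2⟩ := hsat
      exact ⟨τ, h1, h2, fun j hj => absurd hj (by omega)⟩
    | succ k ih =>
      intro hk
      obtain ⟨τ, hτa, hτs, hτw⟩ := ih (by omega)
      set jk : Fin (m+1) := ⟨k, by omega⟩ with hjk
      have hjkv : jk.val = k := rfl
      obtain ⟨ℓ, hℓmem, hℓtrue⟩ := hτs _ (hcolF jk)
      obtain ⟨i₀, _, rfl⟩ := Finset.mem_image.mp hℓmem
      by_cases hc : n - k ≤ i₀.val
      · refine ⟨τ, hτa, hτs, fun j hj => ?_⟩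
        rcases Nat.lt_or_ge j.val k with h | h
        · exact hτw j h
        · have hjeq : j = jk := Fin.ext (by rw [hjkv]; omega)
          exact ⟨i₀, by rw [hjeq, hjkv]; exact hc, by rw [hjeq]; exact hℓtrue⟩
      · push_neg at hc
        have hkn : k < n := by omega
        set t : Fin (n+1) := ⟨n - k, by omega⟩ with ht
        have htv : t.val = n - k := rfl
        obtain ⟨σ, hσ, h1, h2, h3⟩ := hrow i₀ t
        obtain ⟨hτa', hτs'⟩ := symm_transport' neg F σ hσ τ hτa hτs
        refine ⟨fun ℓ => τ (σ.symm ℓ), hτa', hτs', fun j hj => ?_⟩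
        rcases Nat.lt_or_ge j.val k with h | h
        · obtain ⟨i, hi1, hi2⟩ := hτw j h
          have hine : i ≠ i₀ := by
            intro he; rw [he] at hi1; omega
          have hint : i ≠ t := by
            intro he; rw [he, htv] at hi1; omega
          refine ⟨i, hi1, ?_⟩
          have hfix := h3 i j hine hint
          have : σ.symm (M i j) = M i j := Equiv.symm_apply_eq σ |>.mpr hfix.symm
          simpa [this] using hi2
        · have hjeq : j = jk := Fin.ext (by rw [hjkv]; omega)
          refine ⟨t, by rw [htv, hjeq, hjkv], ?_⟩
          have hss : σ.symm (M t j) = M i₀ j := by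
            rw [hjeq]
            exact Equiv.symm_apply_eq σ |>.mpr (h1 jk).symm
          show τ (σ.symm (M t j)) = true
          rw [hss, hjeq]
          exact hℓtrue
  obtain ⟨τ, hτa, hτs, hτw⟩ := key (m+1) le_rfl
  have hτw' : ∀ j : Fin (m+1), ∃ i : Fin (n+1), n - j.val ≤ i.val ∧ τ (M i j) = true :=
    fun j => hτw j j.isLt
  -- Step 2: flip the staircase region to false.
  set P1 : α → Prop := fun ℓ => ∃ i : Fin (n+1), ∃ j : Fin (m+1), i.val + j.val < n ∧ ℓ = M i j
    with hP1
  set P2 : α → Prop := fun ℓ => ∃ i : Fin (n+1), ∃ j : Fin (m+1), i.val + j.val < n ∧ ℓ = neg (M i j)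
    with hP2
  set τ' : α → Bool := fun ℓ => if P1 ℓ then false else if P2 ℓ then true else τ ℓ with hτ'
  -- pointwise evaluation lemmas
  have hE1 : ∀ (i : Fin (n+1)) (j : Fin (m+1)), i.val + j.val < n → τ' (M i j) = false := by
    intro i j hij
    simp only [hτ']
    rw [if_pos ⟨i, j, hij, rfl⟩]
  have hnotP2M : ∀ (i : Fin (n+1)) (j : Fin (m+1)), ¬ P2 (M i j) := by
    intro i j ⟨i', j', _, he⟩
    exact hcompl i j i' j' he
  have hE2 : ∀ (i : Fin (n+1)) (j : Fin (m+1)), ¬ (i.val + j.val < n) → τ' (M i j) = τ (M i j) := by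
    intro i j hij
    have hnp1 : ¬ P1 (M i j) := by
      rintro ⟨i', j', hlt, he⟩
      obtain ⟨rfl, rfl⟩ := hdist i j i' j' he
      exact hij hlt
    simp only [hτ']
    rw [if_neg hnp1, if_neg (hnotP2M i j)]
  have hE3 : ∀ (i : Fin (n+1)) (j : Fin (m+1)), i.val + j.val < n → τ' (neg (M i j)) = true := by
    intro i j hij
    have hnp1 : ¬ P1 (neg (M i j)) := by
      rintro ⟨i', j', _, he⟩
      exact hcompl i' j' i j he.symm
    simp only [hτ']
    rw [if_neg hnp1, if_pos ⟨i, j, hij, rfl⟩]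
  refine ⟨τ', ?_, ?_, ?_, ?_⟩
  · -- IsAssignment
    intro ℓ
    by_cases hc1 : P1 ℓ
    · obtain ⟨i, j, hij, rfl⟩ := hc1
      rw [hE1 i j hij, hE3 i j hij]
      rfl
    · by_cases hc2 : P2 ℓ
      · obtain ⟨i, j, hij, rfl⟩ := hc2
        rw [hneg.1 (M i j)]
        have : τ' (neg (M i j)) = true := hE3 i j hij
        rw [this, hE1 i j hij]
        rfl
      · have hℓ : τ' ℓ = τ ℓ := by
          simp only [hτ']; rw [if_neg hc1, if_neg hc2]
        have hnp1 : ¬ P1 (neg ℓ) := by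
          rintro ⟨i, j, hij, he⟩
          exact hc2 ⟨i, j, hij, by rw [← he, hneg.1]⟩
        have hnp2 : ¬ P2 (neg ℓ) := by
          rintro ⟨i, j, hij, he⟩
          have : ℓ = M i j := by
            have := congrArg neg he
            rwa [hneg.1, hneg.1] at this
          exact hc1 ⟨i, j, hij, this⟩
        have hnegℓ : τ' (neg ℓ) = τ (neg ℓ) := by
          simp only [hτ']; rw [if_neg hnp1, if_neg hnp2]
        rw [hℓ, hnegℓ, hτa ℓ]
  · -- SatFormula
    intro C hC
    obtain ⟨ℓ, hℓC, hℓtrue⟩ := hτs C hC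
    by_cases hc1 : P1 ℓ
    · obtain ⟨i, j, hij, rfl⟩ := hc1
      -- C must be column j by ULC
      have hMmem : M i j ∈ Finset.univ.image fun i => M i j :=
        Finset.mem_image_of_mem _ (Finset.mem_univ i)
      have hCeq : C = Finset.univ.image fun i => M i j := by
        by_contra hne
        exact hulc j C hC hne (M i j) hMmem hℓC
      obtain ⟨iw, hiw1, hiw2⟩ := hτw' j
      have hge : ¬ (iw.val + j.val < n) := by omega
      refine ⟨M iw j, ?_, ?_⟩
      · rw [hCeq]; exact Finset.mem_image_of_mem _ (Finset.mem_univ iw)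
      · rw [hE2 iw j hge]; exact hiw2
    · by_cases hc2 : P2 ℓ
      · refine ⟨ℓ, hℓC, ?_⟩
        obtain ⟨i, j, hij, rfl⟩ := hc2
        exact hE3 i j hij
      · refine ⟨ℓ, hℓC, ?_⟩
        have : τ' ℓ = τ ℓ := by simp only [hτ']; rw [if_neg hc1, if_neg hc2]
        rw [this]; exact hℓtrue
  · -- M (last n) 0 is true
    obtain ⟨i, hi1, hi2⟩ := hτw' 0
    have h0 : ((0 : Fin (m+1)) : ℕ) = 0 := rfl
    rw [h0] at hi1
    have hieq : i = Fin.last n := by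
      apply Fin.ext
      have := i.isLt
      rw [Fin.val_last]
      omega
    rw [← hieq]
    have hge : ¬ (i.val + ((0 : Fin (m+1)) : ℕ) < n) := by rw [h0]; omega
    rw [hE2 i 0 hge]
    exact hi2
  · -- staircase false
    intro i j _ h2
    exact hE1 i j (by omega)
end
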